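/- Let q ≥ 2 and a > 0 be real numbers and w > 0 a real number. Suppose g and h are analytic on a disc {u ∈ ℂ : |u| < ρ} for some ρ > q^{−a}, that f(u) = Σ_{n≥0} a_n u^n (a_n ∈ ℂ) converges for |u| < q^{−a}, and that f(u) = g(u)·(q^{−a} − u)^{−w} + h(u) for all |u| < q^{−a}, where z^{−w} denotes the principal complex power (this is well defined and analytic in u on the disc since Re(q^{−a} − u) > 0 there). Then a_n · q^{−an} · n^{1−w} → g(q^{−a})·q^{aw}/Γ(w) as n → ∞. -/

import Mathlib

/-!
Darboux's method. Expanding `g` at `r = q^(-a)` by iterated slopes,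
`g u = ∑_{k ≤ K} g_k(r) (u - r)^k + (u - r)^(K+1) g_{K+1}(u)`, writes `f` as a finite combination
of pure powers `(r - u)^(k - w)` plus the remainder `g_{K+1}(u) (r - u)^(K+1-w) + h u`.
The `n`-th Taylor coefficient of `(r - u)^(-s)` is `r^(-s-n) s(s+1)⋯(s+n-1)/n!`, which Gauss's
product formula for `Γ` turns into `r^(-s-n) n^(s-1) / Γ(s) · (1 + o(1))`; after normalising by
`r^n n^(1-w)` only `k = 0` survives. For `K > w` the derivative of the remainder extends
continuously to the closed disc of radius `r`, so Cauchy's estimate applied to it bounds the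
remainder's coefficients by `O(r^(-n) / n)`, which is negligible because `w > 0`.
-/

open Filter Topology Metric Finset Function Complex
open scoped Nat NNReal

noncomputable def taylorCoeff (F : ℂ → ℂ) (n : ℕ) : ℂ := (n ! : ℂ)⁻¹ * iteratedDeriv n F 0

lemma hasSum_taylorCoeff {F : ℂ → ℂ} {r : ℝ} (hF : DifferentiableOn ℂ F (ball 0 r)) {u : ℂ}
    (hu : u ∈ ball (0 : ℂ) r) : HasSum (fun n ↦ taylorCoeff F n * u ^ n) (F u) := by
  simpa [taylorCoeff, mul_comm, mul_left_comm] using Complex.hasSum_taylorSeries_on_ball hF hu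

lemma taylorCoeff_succ (F : ℂ → ℂ) (n : ℕ) :
    taylorCoeff F (n + 1) = taylorCoeff (deriv F) n / (n + 1) := by
  rw [taylorCoeff, taylorCoeff, iteratedDeriv_succ', Nat.factorial_succ]
  push_cast
  field_simp

lemma hasFPowerSeriesOnBall_ofScalars_of_hasSum {c : ℕ → ℂ} {F : ℂ → ℂ} {r : ℝ≥0} (hr : 0 < r)
    (hc : ∀ u ∈ ball (0 : ℂ) r, HasSum (fun n ↦ c n * u ^ n) (F u)) :
    HasFPowerSeriesOnBall F (.ofScalars ℂ c) 0 r where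
  r_le := ENNReal.le_of_forall_nnreal_lt fun t ht ↦ by
    refine FormalMultilinearSeries.le_radius_of_summable _ ?_
    simpa [FormalMultilinearSeries.ofScalars_norm] using
      (hc t (by simpa using ht)).summable.norm
  r_pos := by simpa using hr
  hasSum {u} hu := by
    simpa [FormalMultilinearSeries.ofScalars_apply_eq, mul_comm] using
      hc u (by simpa using hu)

lemma eq_of_hasSum_mul_pow {c d : ℕ → ℂ} {F : ℂ → ℂ} {r : ℝ} (hr : 0 < r)
    (hc : ∀ u ∈ ball (0 : ℂ) r, HasSum (fun n ↦ c n * u ^ n) (F u))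
    (hd : ∀ u ∈ ball (0 : ℂ) r, HasSum (fun n ↦ d n * u ^ n) (F u)) : c = d := by
  lift r to ℝ≥0 using hr.le
  have hr' : 0 < r := by exact_mod_cast hr
  exact FormalMultilinearSeries.ofScalars_series_injective ℂ ℂ <|
    (hasFPowerSeriesOnBall_ofScalars_of_hasSum hr' hc).hasFPowerSeriesAt.eq_formalMultilinearSeries
      (hasFPowerSeriesOnBall_ofScalars_of_hasSum hr' hd).hasFPowerSeriesAt

lemma norm_taylorCoeff_mul_pow_le {F : ℂ → ℂ} {r M : ℝ} (hr : 0 < r)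
    (hF : DifferentiableOn ℂ F (ball 0 r)) (hM : ∀ u ∈ ball (0 : ℂ) r, ‖F u‖ ≤ M) (n : ℕ) :
    ‖taylorCoeff F n‖ * r ^ n ≤ M := by
  have hlt : ∀ t ∈ Set.Ioo 0 r, ‖taylorCoeff F n‖ * t ^ n ≤ M := fun t ht ↦ by
    have hsub : closedBall (0 : ℂ) t ⊆ ball 0 r := closedBall_subset_ball ht.2
    have := Complex.norm_iteratedDeriv_le_of_forall_mem_sphere_norm_le n ht.1
      (hF.diffContOnCl_ball hsub) fun z hz ↦ hM z (hsub (sphere_subset_closedBall hz))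
    rw [taylorCoeff, norm_mul, norm_inv, Complex.norm_natCast]
    have ht0 : 0 < t ^ n := pow_pos ht.1 n
    calc (n ! : ℝ)⁻¹ * ‖iteratedDeriv n F 0‖ * t ^ n
        ≤ (n ! : ℝ)⁻¹ * (n ! * M / t ^ n) * t ^ n := by gcongr
      _ = M := by field_simp
  have hcont : Tendsto (fun t : ℝ ↦ ‖taylorCoeff F n‖ * t ^ n) (𝓝[<] r)
      (𝓝 (‖taylorCoeff F n‖ * r ^ n)) :=
    ((continuous_const.mul (continuous_pow n)).tendsto r).mono_left nhdsWithin_le_nhds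
  exact le_of_tendsto hcont (eventually_of_mem (Ioo_mem_nhdsLT hr) hlt)

lemma norm_taylorCoeff_succ_mul_pow_le {F F' : ℂ → ℂ} {r M : ℝ} (hr : 0 < r)
    (hF : ∀ u ∈ ball (0 : ℂ) r, HasDerivAt F (F' u) u) (hM : ∀ u ∈ ball (0 : ℂ) r, ‖F' u‖ ≤ M)
    (n : ℕ) : ‖taylorCoeff F (n + 1)‖ * r ^ (n + 1) ≤ M * r / (n + 1) := by
  have hderiv : Set.EqOn (deriv F) F' (ball 0 r) := fun u hu ↦ (hF u hu).deriv
  have hdiff : DifferentiableOn ℂ (deriv F) (ball 0 r) := DifferentiableOn.deriv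
    (fun u hu ↦ (hF u hu).differentiableAt.differentiableWithinAt) isOpen_ball
  have := norm_taylorCoeff_mul_pow_le hr hdiff (fun u hu ↦ hderiv hu ▸ hM u hu) n
  rw [taylorCoeff_succ, norm_div, pow_succ, show ‖(n : ℂ) + 1‖ = n + 1 by norm_cast,
    le_div_iff₀ (by positivity)]
  calc _ = ‖taylorCoeff (deriv F) n‖ * r ^ n * r := by field_simp
    _ ≤ M * r := by gcongr

lemma tendsto_taylorCoeff_mul_rpow_of_hasDerivAt {F F' : ℂ → ℂ} {r w : ℝ} (hr : 0 < r)
    (hw : 0 < w) (hF : ∀ u ∈ ball (0 : ℂ) r, HasDerivAt F (F' u) u)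
    (hF' : ContinuousOn F' (closedBall 0 r)) :
    Tendsto (fun n : ℕ ↦ taylorCoeff F n * ((r ^ n * (n : ℝ) ^ (1 - w) : ℝ) : ℂ)) atTop (𝓝 0) := by
  obtain ⟨M, hM⟩ := (isCompact_closedBall (0 : ℂ) r).exists_bound_of_continuousOn hF'
  rw [← tendsto_add_atTop_iff_nat 1]
  have hbound : ∀ n : ℕ,
      ‖taylorCoeff F (n + 1) * ((r ^ (n + 1) * ((n + 1 : ℕ) : ℝ) ^ (1 - w) : ℝ) : ℂ)‖ ≤
        M * r * ((n + 1 : ℕ) : ℝ) ^ (-w) := fun n ↦ by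
    have hn : (0 : ℝ) < (n + 1 : ℕ) := by positivity
    have := norm_taylorCoeff_succ_mul_pow_le hr hF (fun u hu ↦ hM u (ball_subset_closedBall hu)) n
    rw [norm_mul, Complex.norm_real, Real.norm_of_nonneg (by positivity), sub_eq_add_neg,
      Real.rpow_add hn, Real.rpow_one]
    calc _ = ‖taylorCoeff F (n + 1)‖ * r ^ (n + 1) * (n + 1 : ℕ) * ((n + 1 : ℕ) : ℝ) ^ (-w) :=
          by ring
      _ ≤ M * r / (n + 1) * (n + 1 : ℕ) * ((n + 1 : ℕ) : ℝ) ^ (-w) := by gcongr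
      _ = M * r * ((n + 1 : ℕ) : ℝ) ^ (-w) := by push_cast; field_simp
  have hlim : Tendsto (fun n : ℕ ↦ M * r * ((n + 1 : ℕ) : ℝ) ^ (-w)) atTop (𝓝 0) := by
    simpa using ((tendsto_rpow_neg_atTop hw).comp
      (tendsto_natCast_atTop_atTop.comp (tendsto_add_atTop_nat 1))).const_mul (M * r)
  exact squeeze_zero_norm hbound hlim

lemma tendsto_taylorCoeff_mul_rpow_of_differentiableOn {F : ℂ → ℂ} {r ρ w : ℝ} (hr : 0 < r)
    (hrρ : r < ρ) (hw : 0 < w) (hF : DifferentiableOn ℂ F (ball 0 ρ)) :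
    Tendsto (fun n : ℕ ↦ taylorCoeff F n * ((r ^ n * (n : ℝ) ^ (1 - w) : ℝ) : ℂ)) atTop (𝓝 0) :=
  tendsto_taylorCoeff_mul_rpow_of_hasDerivAt hr hw
    (fun _ hu ↦ (hF.differentiableAt (isOpen_ball.mem_nhds
      (ball_subset_ball hrρ.le hu))).hasDerivAt)
    ((hF.deriv isOpen_ball).continuousOn.mono (closedBall_subset_ball hrρ))

lemma ofReal_sub_mem_slitPlane {r : ℝ} {u : ℂ} (hu : u ∈ ball (0 : ℂ) r) :
    (r : ℂ) - u ∈ slitPlane := by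
  refine mem_slitPlane_iff.mpr (Or.inl ?_)
  simpa using (re_le_norm u).trans_lt (mem_ball_zero_iff.mp hu)

lemma hasDerivAt_const_sub_cpow {c u : ℂ} (hu : c - u ∈ slitPlane) (z : ℂ) :
    HasDerivAt (fun v ↦ (c - v) ^ z) (-(z * (c - u) ^ (z - 1))) u := by
  simpa using ((hasDerivAt_id u).const_sub c).cpow_const (c := z) hu

lemma continuousOn_ofReal_sub_cpow {r : ℝ} {z : ℂ} (hz : 0 < z.re) :
    ContinuousOn (fun u ↦ ((r : ℂ) - u) ^ z) (closedBall 0 r) := fun u hu ↦ by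
  have hre : 0 ≤ ((r : ℂ) - u).re := by
    simpa using (re_le_norm u).trans (mem_closedBall_zero_iff.mp hu)
  exact ((continuousAt_cpow_const_of_re_pos (Or.inl hre) hz).comp
    (continuousAt_const.sub continuousAt_id)).continuousWithinAt

lemma tendsto_taylorCoeff_mul_ofReal_sub_cpow_mul_rpow {G : ℂ → ℂ} {r ρ w : ℝ} (hr : 0 < r)
    (hrρ : r < ρ) (hw : 0 < w) (hG : DifferentiableOn ℂ G (ball 0 ρ)) {z : ℂ} (hz : 1 < z.re) :
    Tendsto (fun n : ℕ ↦ taylorCoeff (fun v ↦ G v * ((r : ℂ) - v) ^ z) n *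
      ((r ^ n * (n : ℝ) ^ (1 - w) : ℝ) : ℂ)) atTop (𝓝 0) := by
  have hsub : closedBall (0 : ℂ) r ⊆ ball 0 ρ := closedBall_subset_ball hrρ
  refine tendsto_taylorCoeff_mul_rpow_of_hasDerivAt (F' := fun u ↦
      deriv G u * ((r : ℂ) - u) ^ z + G u * -(z * ((r : ℂ) - u) ^ (z - 1))) hr hw
    (fun u hu ↦ ?_) ?_
  · exact (hG.differentiableAt (isOpen_ball.mem_nhds (hsub (ball_subset_closedBall hu))))
      |>.hasDerivAt.mul (hasDerivAt_const_sub_cpow (ofReal_sub_mem_slitPlane hu) z)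
  · exact ((hG.deriv isOpen_ball).continuousOn.mono hsub).mul
      (continuousOn_ofReal_sub_cpow (by linarith)) |>.add <| (hG.continuousOn.mono hsub).mul
        (continuousOn_const.mul (continuousOn_ofReal_sub_cpow (by simpa using hz))).neg

lemma iteratedDeriv_const_sub_cpow {c z : ℂ} (n : ℕ) {u : ℂ} (hu : c - u ∈ slitPlane) :
    iteratedDeriv n (fun v ↦ (c - v) ^ z) u =
      (∏ j ∈ range n, ((j : ℂ) - z)) * (c - u) ^ (z - n) := by
  induction n generalizing u with
  | zero => simp
  | succ n ih =>
    have hopen : IsOpen {v : ℂ | c - v ∈ slitPlane} :=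
      isOpen_slitPlane.preimage (continuous_const.sub continuous_id)
    have hev : iteratedDeriv n (fun v ↦ (c - v) ^ z) =ᶠ[𝓝 u]
        fun v ↦ (∏ j ∈ range n, ((j : ℂ) - z)) * (c - v) ^ (z - n) :=
      eventually_of_mem (hopen.mem_nhds hu) fun v hv ↦ ih hv
    rw [iteratedDeriv_succ, hev.deriv_eq,
      ((hasDerivAt_const_sub_cpow hu (z - n)).const_mul _).deriv, prod_range_succ,
      show z - ((n + 1 : ℕ) : ℂ) = z - n - 1 by push_cast; ring]
    ring

lemma taylorCoeff_ofReal_sub_cpow_neg {r : ℝ} (hr : 0 < r) (s : ℝ) (n : ℕ) :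
    taylorCoeff (fun v ↦ ((r : ℂ) - v) ^ (-(s : ℂ))) n =
      ((r ^ (-s - n) * ((∏ j ∈ range n, (s + j)) / n !) : ℝ) : ℂ) := by
  rw [taylorCoeff, iteratedDeriv_const_sub_cpow n (by simpa using hr), sub_zero, ofReal_mul,
    ofReal_cpow hr.le]
  push_cast
  rw [show ∏ j ∈ range n, ((j : ℂ) - -(s : ℂ)) = ∏ j ∈ range n, ((s : ℂ) + j) from
    prod_congr rfl fun j _ ↦ by ring]
  ring

lemma tendsto_prod_add_div_factorial_mul_rpow (s : ℝ) :
    Tendsto (fun n : ℕ ↦ (∏ j ∈ range n, (s + j)) / n ! * (n : ℝ) ^ (1 - s)) atTop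
      (𝓝 (Real.Gamma s)⁻¹) := by
  by_cases hs : ∃ m : ℕ, s = -m
  · obtain ⟨m, rfl⟩ := hs
    rw [Real.Gamma_neg_nat_eq_zero, inv_zero]
    refine tendsto_const_nhds.congr' ?_
    filter_upwards [eventually_gt_atTop m] with n hn
    rw [prod_eq_zero (mem_range.mpr hn) (neg_add_cancel _), zero_div, zero_mul]
  · push Not at hs
    have hlim := (tendsto_natCast_div_add_atTop s).mul
      ((Real.GammaSeq_tendsto_Gamma s).inv₀ (Real.Gamma_ne_zero hs))
    rw [one_mul] at hlim
    refine hlim.congr' ?_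
    filter_upwards [eventually_gt_atTop 0] with n hn
    have hn0 : (0 : ℝ) < n := by exact_mod_cast hn
    have hns : (n : ℝ) + s ≠ 0 := fun h ↦ hs n (by linarith)
    rw [Real.GammaSeq, prod_range_succ, Real.rpow_sub hn0, Real.rpow_one]
    field_simp
    ring

lemma tendsto_taylorCoeff_ofReal_sub_cpow_neg {r : ℝ} (hr : 0 < r) (s : ℝ) :
    Tendsto (fun n : ℕ ↦ taylorCoeff (fun v ↦ ((r : ℂ) - v) ^ (-(s : ℂ))) n *
      ((r ^ n * (n : ℝ) ^ (1 - s) : ℝ) : ℂ)) atTop (𝓝 ((r ^ (-s) / Real.Gamma s : ℝ) : ℂ)) := by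
  have hlim := (tendsto_prod_add_div_factorial_mul_rpow s).const_mul (r ^ (-s))
  refine ((continuous_ofReal.tendsto _).comp hlim).congr fun n ↦ ?_
  rw [taylorCoeff_ofReal_sub_cpow_neg hr, ← ofReal_mul, comp_apply, div_eq_mul_inv]
  congr 1
  rw [Real.rpow_sub hr, Real.rpow_natCast]
  field_simp

lemma tendsto_taylorCoeff_ofReal_sub_cpow_neg_of_lt {r s w : ℝ} (hr : 0 < r) (hsw : s < w) :
    Tendsto (fun n : ℕ ↦ taylorCoeff (fun v ↦ ((r : ℂ) - v) ^ (-(s : ℂ))) n *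
      ((r ^ n * (n : ℝ) ^ (1 - w) : ℝ) : ℂ)) atTop (𝓝 0) := by
  have hpow : Tendsto (fun n : ℕ ↦ (n : ℝ) ^ (s - w)) atTop (𝓝 0) := by
    simpa [comp_def] using
      (tendsto_rpow_neg_atTop (sub_pos.mpr hsw)).comp tendsto_natCast_atTop_atTop
  have hlim := (tendsto_taylorCoeff_ofReal_sub_cpow_neg hr s).mul
    ((continuous_ofReal.tendsto _).comp hpow)
  rw [ofReal_zero, mul_zero] at hlim
  refine hlim.congr' ?_
  filter_upwards [eventually_gt_atTop 0] with n hn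
  have hn0 : (0 : ℝ) < n := by exact_mod_cast hn
  rw [comp_apply, mul_assoc, ← ofReal_mul, mul_assoc, ← Real.rpow_add hn0]
  ring_nf

lemma eq_sum_add_pow_mul_iterate_dslope {𝕜 : Type*} [NontriviallyNormedField 𝕜] (g : 𝕜 → 𝕜)
    (c u : 𝕜) (m : ℕ) :
    g u = ∑ k ∈ range m, (swap dslope c)^[k] g c * (u - c) ^ k +
      (u - c) ^ m * (swap dslope c)^[m] g u := by
  induction m with
  | zero => simp
  | succ m ih =>
    have hstep := sub_smul_dslope ((swap dslope c)^[m] g) c u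
    rw [smul_eq_mul] at hstep
    rw [ih, sum_range_succ, iterate_succ_apply', swap, pow_succ, mul_assoc, hstep]
    ring

lemma differentiableOn_iterate_dslope {g : ℂ → ℂ} {s : Set ℂ} {c : ℂ} (hs : s ∈ 𝓝 c)
    (hg : DifferentiableOn ℂ g s) (k : ℕ) : DifferentiableOn ℂ ((swap dslope c)^[k] g) s := by
  induction k with
  | zero => exact hg
  | succ k ih => rw [iterate_succ_apply']; exact (differentiableOn_dslope hs).mpr ih

lemma sub_pow_mul_cpow {x y : ℂ} (h : x ≠ y) (k : ℕ) (z : ℂ) :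
    (y - x) ^ k * (x - y) ^ z = (-1) ^ k * (x - y) ^ (k + z) := by
  rw [cpow_add _ _ (sub_ne_zero.mpr h), cpow_natCast, ← neg_sub x y, neg_pow]
  ring

lemma mul_sub_cpow_eq_sum_add {g : ℂ → ℂ} {c u : ℂ} (hu : u ≠ c) (z : ℂ) (m : ℕ) :
    g u * (c - u) ^ z = ∑ k ∈ range m, (-1) ^ k * (swap dslope c)^[k] g c * (c - u) ^ (k + z) +
      (-1) ^ m * ((swap dslope c)^[m] g u * (c - u) ^ (m + z)) := by
  rw [eq_sum_add_pow_mul_iterate_dslope g c u m, add_mul, sum_mul]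
  congr 1
  · refine sum_congr rfl fun k _ ↦ ?_
    rw [mul_assoc, sub_pow_mul_cpow hu.symm]
    ring
  · rw [mul_right_comm, sub_pow_mul_cpow hu.symm]
    ring

lemma coeff_eq_sum_taylorCoeff_ofReal_sub_cpow_add {r ρ w : ℝ} (hr : 0 < r) (hrρ : r < ρ)
    {A : ℕ → ℂ} {f g h : ℂ → ℂ}
    (hf : ∀ u ∈ ball (0 : ℂ) r, HasSum (fun n ↦ A n * u ^ n) (f u))
    (hg : DifferentiableOn ℂ g (ball 0 ρ)) (hh : DifferentiableOn ℂ h (ball 0 ρ))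
    (heq : ∀ u ∈ ball (0 : ℂ) r, f u = g u * ((r : ℂ) - u) ^ (-(w : ℂ)) + h u) (m : ℕ) :
    A = fun n ↦ ∑ k ∈ range m, (-1) ^ k * (swap dslope (r : ℂ))^[k] g r *
        taylorCoeff (fun v ↦ ((r : ℂ) - v) ^ (-((w - k : ℝ) : ℂ))) n +
      ((-1) ^ m * taylorCoeff (fun v ↦ (swap dslope (r : ℂ))^[m] g v *
        ((r : ℂ) - v) ^ (-((w - m : ℝ) : ℂ))) n + taylorCoeff h n) := by
  have hball : ball (0 : ℂ) r ⊆ ball 0 ρ := ball_subset_ball hrρ.le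
  have hP : ∀ s : ℝ, DifferentiableOn ℂ (fun v ↦ ((r : ℂ) - v) ^ (-(s : ℂ))) (ball 0 r) :=
    fun s u hu ↦ (hasDerivAt_const_sub_cpow (ofReal_sub_mem_slitPlane hu) _).differentiableAt
      |>.differentiableWithinAt
  have hG : DifferentiableOn ℂ ((swap dslope (r : ℂ))^[m] g) (ball 0 r) :=
    (differentiableOn_iterate_dslope
      (isOpen_ball.mem_nhds (by simpa [abs_of_pos hr] using hrρ)) hg m).mono hball
  refine eq_of_hasSum_mul_pow hr hf fun u hu ↦ ?_
  have hsum := (hasSum_sum (s := range m) fun k _ ↦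
    (hasSum_taylorCoeff (hP (w - k)) hu).mul_left ((-1) ^ k * (swap dslope (r : ℂ))^[k] g r)).add
      <| ((hasSum_taylorCoeff (hG.mul (hP (w - m))) hu).mul_left ((-1) ^ m)).add
        (hasSum_taylorCoeff (hh.mono hball) hu)
  have hexp : ∀ k : ℕ, (k : ℂ) + -(w : ℂ) = -((w - k : ℝ) : ℂ) := fun k ↦ by push_cast; ring
  have hur : u ≠ r := fun h ↦ by simp [h, abs_of_pos hr] at hu
  rw [heq u hu, mul_sub_cpow_eq_sum_add hur _ m, add_assoc]
  simp only [hexp]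
  exact hsum.congr_fun fun n ↦ by simp only [add_mul, sum_mul, mul_assoc]; rfl

theorem tendsto_coeff_mul_rpow_of_eq_mul_ofReal_sub_cpow_add {r ρ w : ℝ} (hr : 0 < r)
    (hrρ : r < ρ) (hw : 0 < w) {A : ℕ → ℂ} {f g h : ℂ → ℂ}
    (hf : ∀ u ∈ ball (0 : ℂ) r, HasSum (fun n ↦ A n * u ^ n) (f u))
    (hg : DifferentiableOn ℂ g (ball 0 ρ)) (hh : DifferentiableOn ℂ h (ball 0 ρ))
    (heq : ∀ u ∈ ball (0 : ℂ) r, f u = g u * ((r : ℂ) - u) ^ (-(w : ℂ)) + h u) :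
    Tendsto (fun n : ℕ ↦ A n * ((r ^ n * (n : ℝ) ^ (1 - w) : ℝ) : ℂ)) atTop
      (𝓝 (g r * ((r ^ (-w) / Real.Gamma w : ℝ) : ℂ))) := by
  set G : ℕ → ℂ → ℂ := fun k ↦ (swap dslope (r : ℂ))^[k] g
  set P : ℕ → ℂ → ℂ := fun k v ↦ ((r : ℂ) - v) ^ (-((w - k : ℝ) : ℂ))
  set X : ℕ → ℂ := fun n ↦ ((r ^ n * (n : ℝ) ^ (1 - w) : ℝ) : ℂ)
  obtain ⟨K, hK⟩ := exists_nat_gt w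
  have hlower : ∀ k : ℕ, Tendsto (fun n ↦ taylorCoeff (P (k + 1)) n * X n) atTop (𝓝 0) :=
    fun k ↦ tendsto_taylorCoeff_ofReal_sub_cpow_neg_of_lt hr (by push_cast; linarith)
  have hleading : Tendsto (fun n ↦ taylorCoeff (P 0) n * X n) atTop
      (𝓝 ((r ^ (-w) / Real.Gamma w : ℝ) : ℂ)) := by
    simpa only [P, Nat.cast_zero, sub_zero] using tendsto_taylorCoeff_ofReal_sub_cpow_neg hr w
  have hmain : Tendsto (fun n ↦ ∑ k ∈ range (K + 1), (-1) ^ k * G k r * (taylorCoeff (P k) n * X n))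
      atTop (𝓝 (g r * ((r ^ (-w) / Real.Gamma w : ℝ) : ℂ))) := by
    simp only [sum_range_succ' _ K]
    convert (tendsto_finsetSum (range K) fun k _ ↦ (hlower k).const_mul
      ((-1) ^ (k + 1) * G (k + 1) r)).add (hleading.const_mul (G 0 r)) using 2 <;> simp [G]
  have hremainder : Tendsto (fun n ↦ taylorCoeff (fun v ↦ G (K + 1) v * P (K + 1) v) n * X n)
      atTop (𝓝 0) :=
    tendsto_taylorCoeff_mul_ofReal_sub_cpow_mul_rpow hr hrρ hw
      (differentiableOn_iterate_dslope
        (isOpen_ball.mem_nhds (by simpa [abs_of_pos hr] using hrρ)) hg (K + 1))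
      (by rw [neg_re, ofReal_re]; push_cast; linarith)
  have hlim := hmain.add ((hremainder.const_mul ((-1) ^ (K + 1))).add
    (tendsto_taylorCoeff_mul_rpow_of_differentiableOn hr hrρ hw hh))
  rw [mul_zero, zero_add, add_zero] at hlim
  rw [coeff_eq_sum_taylorCoeff_ofReal_sub_cpow_add hr hrρ hf hg hh heq (K + 1)]
  exact hlim.congr fun n ↦ by simp only [add_mul, sum_mul, mul_assoc]; rfl

theorem stmt6_general (q a w ρ : ℝ) (hq : 2 ≤ q) (hw : 0 < w)
    (hρ : q ^ (-a) < ρ)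
    (A : ℕ → ℂ) (f g h : ℂ → ℂ)
    (hf : ∀ u : ℂ, ‖u‖ < q ^ (-a) → HasSum (fun n : ℕ => A n * u ^ n) (f u))
    (hg : ∀ u : ℂ, ‖u‖ < ρ → DifferentiableAt ℂ g u)
    (hh : ∀ u : ℂ, ‖u‖ < ρ → DifferentiableAt ℂ h u)
    (heq : ∀ u : ℂ, ‖u‖ < q ^ (-a) →
      f u = g u * (((q ^ (-a) : ℝ) : ℂ) - u) ^ (-(w : ℂ)) + h u) :
    Tendsto (fun n : ℕ => A n * ((q ^ (-(a * (n : ℝ))) * (n : ℝ) ^ (1 - w) : ℝ) : ℂ))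
      atTop (𝓝 (g ((q ^ (-a) : ℝ) : ℂ) * ((q ^ (a * w) / Real.Gamma w : ℝ) : ℂ))) := by
  have hq0 : 0 < q := by linarith
  have hlim := tendsto_coeff_mul_rpow_of_eq_mul_ofReal_sub_cpow_add (Real.rpow_pos_of_pos hq0 _)
    hρ hw (fun u hu ↦ hf u (mem_ball_zero_iff.mp hu))
    (fun u hu ↦ (hg u (mem_ball_zero_iff.mp hu)).differentiableWithinAt)
    (fun u hu ↦ (hh u (mem_ball_zero_iff.mp hu)).differentiableWithinAt)
    (fun u hu ↦ heq u (mem_ball_zero_iff.mp hu))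
  convert hlim using 4 with n
  · rw [← Real.rpow_natCast, ← Real.rpow_mul hq0.le, neg_mul]
  · rw [← Real.rpow_mul hq0.le, neg_mul_neg]

theorem stmt6 (q a w ρ : ℝ) (hq : 2 ≤ q) (ha : 0 < a) (hw : 0 < w)
    (hρ : q ^ (-a) < ρ)
    (A : ℕ → ℂ) (f g h : ℂ → ℂ)
    (hf : ∀ u : ℂ, ‖u‖ < q ^ (-a) → HasSum (fun n : ℕ => A n * u ^ n) (f u))
    (hg : ∀ u : ℂ, ‖u‖ < ρ → DifferentiableAt ℂ g u)
    (hh : ∀ u : ℂ, ‖u‖ < ρ → DifferentiableAt ℂ h u)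
    (heq : ∀ u : ℂ, ‖u‖ < q ^ (-a) →
      f u = g u * (((q ^ (-a) : ℝ) : ℂ) - u) ^ (-(w : ℂ)) + h u) :
    Tendsto (fun n : ℕ => A n * ((q ^ (-(a * (n : ℝ))) * (n : ℝ) ^ (1 - w) : ℝ) : ℂ))
      atTop (𝓝 (g ((q ^ (-a) : ℝ) : ℂ) * ((q ^ (a * w) / Real.Gamma w : ℝ) : ℂ))) :=
  stmt6_general q a w ρ hq hw hρ A f g h hf hg hh heq
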